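/- arXiv:1901.00217 — 7 statements merged into one kernel-verified Lean document; each statement's English description precedes it below -/
import Mathlib

section
/- Let γ = {γ_{ij}}_{0 ≤ i+j ≤ 2n} be a complex bi-sequence with conj(γ_{ij}) = γ_{ji}, and let M(n) be the associated moment matrix, whose rows and columns are indexed by monomials conj(z)^i z^j with i+j ≤ n in degree-lexicographic order, and whose (conj(Z)^k Z^l, conj(Z)^i Z^j) entry is γ_{i+l, j+k}. Let M_φ(n) = J_0 ⊕ J_1 ⊕ ... ⊕ J_n be the block-diagonal matrix of exchange matrices. Then M_φ(n) M(n) = conj(M(n)) M_φ(n). -/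
/-- `M_φ(n) * M(n) = conj(M(n)) * M_φ(n)` for the moment matrix `M(n)` of a
bi-sequence `γ` with `conj (γ i j) = γ j i`, where `M_φ(n) = J_0 ⊕ ⋯ ⊕ J_n`. -/
theorem momentPhi_mul_momentMatrix (n : ℕ) (γ : ℕ → ℕ → ℂ)
    (hsym : ∀ i j, i + j ≤ 2 * n → (starRingEnd ℂ) (γ i j) = γ j i)
    (M Mφ : Matrix {p : Fin (n+1) × Fin (n+1) // (p.1 : ℕ) + (p.2 : ℕ) ≤ n}
             {p : Fin (n+1) × Fin (n+1) // (p.1 : ℕ) + (p.2 : ℕ) ≤ n} ℂ)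
    -- rows indexed by monomials `conj(z)^k z^l` (pair `(k, l)`), columns by
    -- `conj(z)^i z^j` (pair `(i, j)`); the entry is `γ (i + l) (j + k)`.
    (hM : ∀ a b, M a b = γ ((b.1.1 : ℕ) + (a.1.2 : ℕ)) ((b.1.2 : ℕ) + (a.1.1 : ℕ)))
    -- block diagonal of exchange matrices: within each degree, the entry is 1
    -- exactly when the row monomial is the reflection of the column monomial.
    (hMφ : ∀ a b, Mφ a b =
      if (a.1.1 : ℕ) = (b.1.2 : ℕ) ∧ (a.1.2 : ℕ) = (b.1.1 : ℕ) then 1 else 0) :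
    Mφ * M = M.map (starRingEnd ℂ) * Mφ := by
  ext a b
  obtain ⟨⟨a1, a2⟩, ha⟩ := a
  obtain ⟨⟨b1, b2⟩, hb⟩ := b
  dsimp only at ha hb
  simp only [Matrix.mul_apply, Matrix.map_apply, hM, hMφ]
  have ha' : (a2 : ℕ) + (a1 : ℕ) ≤ n := by omega
  have hb' : (b2 : ℕ) + (b1 : ℕ) ≤ n := by omega
  rw [Fintype.sum_eq_single
      (⟨(a2, a1), ha'⟩ : {p : Fin (n+1) × Fin (n+1) // (p.1 : ℕ) + (p.2 : ℕ) ≤ n}),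
    Fintype.sum_eq_single
      (⟨(b2, b1), hb'⟩ : {p : Fin (n+1) × Fin (n+1) // (p.1 : ℕ) + (p.2 : ℕ) ≤ n})]
  · dsimp only
    rw [if_pos ⟨rfl, rfl⟩, if_pos ⟨rfl, rfl⟩, one_mul, mul_one, hsym]
    omega
  · rintro ⟨⟨c1, c2⟩, hc⟩ hne
    dsimp only
    rw [if_neg, mul_zero]
    rintro ⟨h1, h2⟩
    exact hne (Subtype.ext (Prod.ext (Fin.ext h1) (Fin.ext h2)))
  · rintro ⟨⟨c1, c2⟩, hc⟩ hne
    dsimp only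
    rw [if_neg, zero_mul]
    rintro ⟨h1, h2⟩
    exact hne (Subtype.ext (Prod.ext (Fin.ext h2.symm) (Fin.ext h1.symm)))
end

section
/- Let γ = {γ_{ij}}_{0 ≤ i+j ≤ 2n+1} with conj(γ_{ij}) = γ_{ji}, let M(n) be the moment matrix of the truncation γ^{(2n)}, and let B be the matrix with columns B_{conj(Z)^i Z^{n+1−i}} (for i = 0,...,n+1) built from the moments of degree up to 2n+1. Suppose W is any matrix with B = M(n) W. Then the Hermitian matrix C = W* M(n) W is persymmetric: writing C = (c_{ij})_{0 ≤ i,j ≤ n+1}, one has c_{n+1−j, n+1−i} = c_{i,j} for all i, j. -/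
/-! Let `σ` swap the exponents of a monomial, `(i, j) ↦ (j, i)`. The symmetry of `γ` gives
`B a (rev k) = conj (B (σ a) k)`, and `M (σ a) b = M (σ b) a`, i.e. `M_φ(n) M(n)` is symmetric.
Writing `B = M W`, the entries `C (rev j) (rev i)` and `C i j` are then both the conjugate of the
symmetric bilinear form `(u, v) ↦ u ⬝ M_φ(n) M(n) v` evaluated at the columns `W_i` and
`W_(rev j)`, in one order or the other. -/

open Matrix ComplexOrder

namespace Matrix

variable {R ι κ : Type*} [CommSemiring R] [Fintype ι]

theorem dotProduct_submatrix_mulVec_comm {M : Matrix ι ι R} {σ : ι → ι}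
    (hM : ∀ a b, M (σ a) b = M (σ b) a) (u v : ι → R) :
    u ⬝ᵥ M.submatrix σ id *ᵥ v = v ⬝ᵥ M.submatrix σ id *ᵥ u := by
  have hS : (M.submatrix σ id)ᵀ = M.submatrix σ id := Matrix.ext fun a b ↦ hM b a
  rw [dotProduct_mulVec, ← mulVec_transpose, hS, dotProduct_comm]

theorem conjTranspose_mul_mul_apply_eq_star [StarRing R] {M : Matrix ι ι R} {W : Matrix ι κ R}
    {σ : ι → ι} {τ : κ → κ} (hB : ∀ a k, (M * W) a (τ k) = star ((M * W) (σ a) k))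
    (k l : κ) :
    (Wᴴ * M * W) k (τ l) = star (Wᵀ k ⬝ᵥ M.submatrix σ id *ᵥ Wᵀ l) := by
  rw [Matrix.mul_assoc, mul_apply]
  simp only [hB, mulVec, dotProduct, star_sum, star_mul', conjTranspose_apply, transpose_apply,
    submatrix_apply, id, mul_apply]

theorem submatrix_conjTranspose_mul_mul_eq_transpose [StarRing R] {M : Matrix ι ι R}
    {W : Matrix ι κ R} {σ : ι → ι} {τ : κ → κ} (hτ : Function.Involutive τ)
    (hM : ∀ a b, M (σ a) b = M (σ b) a)
    (hB : ∀ a k, (M * W) a (τ k) = star ((M * W) (σ a) k)) :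
    (Wᴴ * M * W).submatrix τ τ = (Wᴴ * M * W)ᵀ := by
  ext j i
  rw [submatrix_apply, transpose_apply, conjTranspose_mul_mul_apply_eq_star hB, ← hτ j,
    conjTranspose_mul_mul_apply_eq_star hB, hτ, dotProduct_submatrix_mulVec_comm hM]

end Matrix

/-- If `B = M(n) * W`, where `M(n)` is the moment matrix of `γ` and `B` is the
block of new columns indexed by the degree-`(n+1)` monomials, then the Hermitian
matrix `C = Wᴴ * M(n) * W` is persymmetric: `C (rev j) (rev i) = C i j`. -/
theorem momentExtension_persymmetric (n : ℕ) (γ : ℕ → ℕ → ℂ)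
    (hsym : ∀ i j, i + j ≤ 2 * n + 1 → (starRingEnd ℂ) (γ i j) = γ j i)
    (M : Matrix {p : Fin (n+1) × Fin (n+1) // (p.1 : ℕ) + (p.2 : ℕ) ≤ n}
         {p : Fin (n+1) × Fin (n+1) // (p.1 : ℕ) + (p.2 : ℕ) ≤ n} ℂ)
    (hM : ∀ a b, M a b = γ ((b.1.1 : ℕ) + (a.1.2 : ℕ)) ((b.1.2 : ℕ) + (a.1.1 : ℕ)))
    (B W : Matrix {p : Fin (n+1) × Fin (n+1) // (p.1 : ℕ) + (p.2 : ℕ) ≤ n}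
           (Fin (n+2)) ℂ)
    -- the `i`-th column of `B` corresponds to the monomial `conj(z)^i z^(n+1-i)`
    (hB : ∀ a (i : Fin (n+2)),
      B a i = γ ((i : ℕ) + (a.1.2 : ℕ)) ((n + 1 - (i : ℕ)) + (a.1.1 : ℕ)))
    (hW : B = M * W) :
    ∀ i j : Fin (n+2), (Wᴴ * M * W) j.rev i.rev = (Wᴴ * M * W) i j := by
  intro i j
  let σ (a : {p : Fin (n+1) × Fin (n+1) // (p.1 : ℕ) + (p.2 : ℕ) ≤ n}) :
      {p : Fin (n+1) × Fin (n+1) // (p.1 : ℕ) + (p.2 : ℕ) ≤ n} :=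
    ⟨a.1.swap, (add_comm _ _).trans_le a.2⟩
  have hMσ : ∀ a b, M (σ a) b = M (σ b) a := by
    intro a b
    simp only [hM, σ, Prod.fst_swap, Prod.snd_swap, add_comm]
  have hBσ : ∀ a (k : Fin (n+2)), (M * W) a k.rev = star ((M * W) (σ a) k) := by
    intro a k
    have hk := k.is_le
    have ha := a.2
    rw [← hW, hB, hB, Fin.val_rev]
    simp only [σ, Prod.fst_swap, Prod.snd_swap, Complex.star_def]
    rw [hsym _ _ (by omega)]
    congr 1 <;> omega
  exact congrFun (congrFun (submatrix_conjTranspose_mul_mul_eq_transpose Fin.rev_involutive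
    hMσ hBσ) j) i
end

section
/- Let M = [[A, B],[B*, C]] be a Hermitian block matrix of complex matrices. Then M is positive semidefinite if and only if: A is positive semidefinite, there exists a matrix W with B = A W, and C − W* A W is positive semidefinite (for some, equivalently any, such W). -/
/-!
A positive semidefinite matrix is a Gram matrix `Rᴴ * R`. Splitting `R = [X | Y]` by columns
gives `A = Xᴴ X`, `B = Xᴴ Y`, `C = Yᴴ Y`. Since `Xᴴ X` and `Xᴴ` have the same rank, hence the same
range, `B = A W` for some `W`, and then `C - Wᴴ A W = (Y - X W)ᴴ (Y - X W)`. Conversely, if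
`A = Xᴴ X` and `C - Wᴴ A W = Zᴴ Z`, the block matrix is the Gram matrix of `[[X, X W], [0, Z]]`.
-/

open Matrix ComplexOrder

namespace Matrix

variable {𝕜 : Type*} [RCLike 𝕜] {k m n : Type*} [Fintype k]

theorem conjTranspose_fromCols_mul_fromCols {α : Type*} [Semiring α] [Star α]
    (X : Matrix k m α) (Y : Matrix k n α) :
    (fromCols X Y)ᴴ * fromCols X Y = fromBlocks (Xᴴ * X) (Xᴴ * Y) (Yᴴ * X) (Yᴴ * Y) := by
  rw [conjTranspose_fromCols_eq_fromRows_conjTranspose, fromRows_mul_fromCols]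

variable [Fintype m]

open scoped MatrixOrder in
theorem PosSemidef.exists_eq_conjTranspose_mul_self {A : Matrix m m 𝕜} (hA : A.PosSemidef) :
    ∃ X : Matrix m m 𝕜, A = Xᴴ * X := by
  classical
  exact CStarAlgebra.nonneg_iff_eq_star_mul_self.mp hA.nonneg

theorem exists_conjTranspose_mul_self_mul_eq {R : Type*} [Field R] [PartialOrder R] [StarRing R]
    [StarOrderedRing R] (X : Matrix k m R) (Y : Matrix k n R) :
    ∃ W : Matrix m n R, Xᴴ * X * W = Xᴴ * Y := by
  have hrange : LinearMap.range (Xᴴ * X).mulVecLin = LinearMap.range Xᴴ.mulVecLin :=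
    Submodule.eq_of_le_of_finrank_eq (mulVecLin_mul Xᴴ X ▸ LinearMap.range_comp_le_range _ _)
      (show (Xᴴ * X).rank = Xᴴ.rank by rw [rank_conjTranspose_mul_self, rank_conjTranspose])
  have hcol (j : n) : ∃ w, (Xᴴ * X) *ᵥ w = Xᴴ *ᵥ fun i ↦ Y i j := by
    have : Xᴴ *ᵥ (fun i ↦ Y i j) ∈ LinearMap.range (Xᴴ * X).mulVecLin :=
      hrange ▸ LinearMap.mem_range_self _ _
    exact LinearMap.mem_range.mp this
  choose w hw using hcol
  refine ⟨of fun i j ↦ w j i, ?_⟩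
  ext i j
  simpa [mul_apply, mulVec, dotProduct] using congrFun (hw j) i

variable [Fintype n]

theorem PosSemidef.exists_eq_mul_of_fromBlocks {A : Matrix m m 𝕜} {B : Matrix m n 𝕜}
    {C : Matrix n n 𝕜} (hM : (fromBlocks A B Bᴴ C).PosSemidef) :
    A.PosSemidef ∧ ∃ W : Matrix m n 𝕜, B = A * W ∧ (C - Wᴴ * A * W).PosSemidef := by
  obtain ⟨R, hR⟩ := hM.exists_eq_conjTranspose_mul_self
  obtain ⟨X, Y, rfl⟩ : ∃ X Y, R = fromCols X Y := ⟨_, _, (fromCols_toCols R).symm⟩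
  rw [conjTranspose_fromCols_mul_fromCols] at hR
  obtain ⟨rfl, rfl, -, rfl⟩ := fromBlocks_inj.mp hR
  obtain ⟨W, hW⟩ := exists_conjTranspose_mul_self_mul_eq X Y
  refine ⟨posSemidef_conjTranspose_mul_self X, W, hW.symm, ?_⟩
  rw [Matrix.mul_assoc] at hW
  have hW' : Yᴴ * (X * W) = Wᴴ * (Xᴴ * (X * W)) := by
    simpa only [conjTranspose_mul, conjTranspose_conjTranspose, Matrix.mul_assoc]
      using (congrArg (·ᴴ * W) hW).symm
  convert posSemidef_conjTranspose_mul_self (Y - X * W) using 1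
  simp only [conjTranspose_sub, conjTranspose_mul, Matrix.sub_mul, Matrix.mul_sub,
    Matrix.mul_assoc, hW', hW]
  abel

theorem PosSemidef.fromBlocks_mul {A : Matrix m m 𝕜} {C : Matrix n n 𝕜} {W : Matrix m n 𝕜}
    (hA : A.PosSemidef) (hS : (C - Wᴴ * A * W).PosSemidef) :
    (fromBlocks A (A * W) (A * W)ᴴ C).PosSemidef := by
  obtain ⟨X, rfl⟩ := hA.exists_eq_conjTranspose_mul_self
  obtain ⟨Z, hZ⟩ := hS.exists_eq_conjTranspose_mul_self
  rw [sub_eq_iff_eq_add] at hZ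
  convert posSemidef_conjTranspose_mul_self (fromBlocks X (X * W) 0 Z) using 1
  rw [fromBlocks_conjTranspose, fromBlocks_multiply, hZ]
  simp [Matrix.mul_assoc, add_comm]

theorem posSemidef_fromBlocks_iff {A : Matrix m m 𝕜} {B : Matrix m n 𝕜} {C : Matrix n n 𝕜} :
    (fromBlocks A B Bᴴ C).PosSemidef ↔
      A.PosSemidef ∧ ∃ W : Matrix m n 𝕜, B = A * W ∧ (C - Wᴴ * A * W).PosSemidef :=
  ⟨PosSemidef.exists_eq_mul_of_fromBlocks, fun ⟨hA, _, hB, hS⟩ ↦ hB ▸ hA.fromBlocks_mul hS⟩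

end Matrix

theorem smuljan_posSemidef_iff_general (m n : ℕ)
    (A : Matrix (Fin m) (Fin m) ℂ) (B : Matrix (Fin m) (Fin n) ℂ)
    (C : Matrix (Fin n) (Fin n) ℂ) :
    (Matrix.fromBlocks A B Bᴴ C).PosSemidef ↔
      A.PosSemidef ∧ ∃ W : Matrix (Fin m) (Fin n) ℂ,
        B = A * W ∧ (C - Wᴴ * A * W).PosSemidef :=
  posSemidef_fromBlocks_iff

/-- Smul'jan's theorem: the Hermitian block matrix `[[A, B], [Bᴴ, C]]` is
positive semidefinite iff `A` is positive semidefinite, `B = A * W` for some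
`W`, and `C - Wᴴ * A * W` is positive semidefinite. -/
theorem smuljan_posSemidef_iff (m n : ℕ)
    (A : Matrix (Fin m) (Fin m) ℂ) (B : Matrix (Fin m) (Fin n) ℂ)
    (C : Matrix (Fin n) (Fin n) ℂ)
    (hA : A.IsHermitian) (hC : C.IsHermitian) :
    (Matrix.fromBlocks A B Bᴴ C).PosSemidef ↔
      A.PosSemidef ∧ ∃ W : Matrix (Fin m) (Fin n) ℂ,
        B = A * W ∧ (C - Wᴴ * A * W).PosSemidef :=
  smuljan_posSemidef_iff_general m n A B C
end

section
/- Let M = [[A, B],[B*, C]] be a Hermitian block matrix with B = A W for some matrix W. Then rank M = rank A + rank(C − W* A W). -/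
open Matrix ComplexOrder

noncomputable def Submodule.prodEquivProd' {R M N : Type*} [Ring R] [AddCommGroup M]
    [AddCommGroup N] [Module R M] [Module R N] (p : Submodule R M) (q : Submodule R N) :
    (p.prod q) ≃ₗ[R] p × q where
  toFun x := (⟨x.1.1, x.2.1⟩, ⟨x.1.2, x.2.2⟩)
  invFun x := ⟨(x.1.1, x.2.1), ⟨x.1.2, x.2.2⟩⟩
  map_add' _ _ := rfl
  map_smul' _ _ := rfl
  left_inv _ := rfl
  right_inv _ := rfl

theorem LinearMap.range_prodMap' {R M N M' N' : Type*} [Ring R] [AddCommGroup M]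
    [AddCommGroup N] [AddCommGroup M'] [AddCommGroup N'] [Module R M] [Module R N]
    [Module R M'] [Module R N'] (f : M →ₗ[R] M') (g : N →ₗ[R] N') :
    LinearMap.range (f.prodMap g) = (LinearMap.range f).prod (LinearMap.range g) := by
  ext ⟨x, y⟩
  constructor
  · rintro ⟨⟨a, b⟩, h⟩
    exact ⟨⟨a, congrArg Prod.fst h⟩, ⟨b, congrArg Prod.snd h⟩⟩
  · rintro ⟨⟨a, rfl⟩, ⟨b, rfl⟩⟩
    exact ⟨(a, b), rfl⟩

theorem rank_fromBlocks_diag (m n : ℕ) (A : Matrix (Fin m) (Fin m) ℂ)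
    (D : Matrix (Fin n) (Fin n) ℂ) :
    (Matrix.fromBlocks A 0 0 D).rank = A.rank + D.rank := by
  let e := LinearEquiv.sumArrowLequivProdArrow (Fin m) (Fin n) ℂ ℂ
  have h : (Matrix.fromBlocks A 0 0 D).mulVecLin =
      (e.symm : _ →ₗ[ℂ] _) ∘ₗ (A.mulVecLin.prodMap D.mulVecLin) ∘ₗ (e : _ →ₗ[ℂ] _) := by
    apply LinearMap.ext
    intro v
    funext i
    cases i <;>
      simp [e, mulVecLin_apply, fromBlocks_mulVec, LinearEquiv.sumArrowLequivProdArrow, Equiv.sumArrowEquivProdArrow,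
        Sum.elim_comp_inl_inr v]
  rw [Matrix.rank, h]
  rw [LinearMap.range_comp, LinearMap.range_comp, LinearEquiv.range, Submodule.map_top,
    LinearEquiv.finrank_map_eq, LinearMap.range_prodMap']
  rw [(Submodule.prodEquivProd' _ _).finrank_eq, Module.finrank_prod]
  rfl

/-- If `B = A * W`, then the Hermitian block matrix `M = [[A, B], [Bᴴ, C]]`
satisfies `rank M = rank A + rank (C - Wᴴ * A * W)`. -/
theorem rank_fromBlocks_eq_rank_add_rank_schur (m n : ℕ)
    (A : Matrix (Fin m) (Fin m) ℂ) (B : Matrix (Fin m) (Fin n) ℂ)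
    (C : Matrix (Fin n) (Fin n) ℂ) (W : Matrix (Fin m) (Fin n) ℂ)
    (hA : A.IsHermitian) (hC : C.IsHermitian) (hB : B = A * W) :
    (Matrix.fromBlocks A B Bᴴ C).rank = A.rank + (C - Wᴴ * A * W).rank := by
  subst hB
  set S := C - Wᴴ * A * W with hS
  have key : Matrix.fromBlocks A (A * W) (A * W)ᴴ C =
      Matrix.fromBlocks 1 0 Wᴴ 1 * Matrix.fromBlocks A 0 0 S * Matrix.fromBlocks 1 W 0 1 := by
    simp [Matrix.fromBlocks_multiply, hS, Matrix.conjTranspose_mul, hA.eq, Matrix.mul_assoc]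
  have hL : IsUnit (Matrix.fromBlocks (1 : Matrix (Fin m) (Fin m) ℂ) 0 Wᴴ 1).det := by
    simp [Matrix.det_fromBlocks_zero₁₂]
  have hU : IsUnit (Matrix.fromBlocks (1 : Matrix (Fin m) (Fin m) ℂ) W 0 1).det := by
    simp [Matrix.det_fromBlocks_zero₂₁]
  rw [key, Matrix.rank_mul_eq_left_of_isUnit_det _ _ hU,
    Matrix.rank_mul_eq_right_of_isUnit_det _ _ hL, rank_fromBlocks_diag]
end

section
/- Let M = [[A, B],[B*, C]] be a Hermitian block matrix with A positive semidefinite and B = A W for some W. Then rank M = rank A if and only if C = W* A W; and in this case M is positive semidefinite. -/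
open Matrix ComplexOrder

/-
`M = L * fromBlocks A 0 0 S * Lᴴ` with `L = fromBlocks 1 0 Wᴴ 1` unipotent and
`S = C - Wᴴ * A * W`, so `rank M = rank A + rank S`, which equals `rank A` exactly when `S = 0`.
When `S = 0`, `M = [1; Wᴴ] * A * [1, W]` is congruent to `A`, hence positive semidefinite.
-/

theorem Submodule.finrank_prod {K V W : Type*} [Field K] [AddCommGroup V] [AddCommGroup W]
    [Module K V] [Module K W] (p : Submodule K V) (q : Submodule K W)
    [FiniteDimensional K p] [FiniteDimensional K q] :
    Module.finrank K (p.prod q) = Module.finrank K p + Module.finrank K q := by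
  have hinj : Function.Injective (p.subtype.prodMap q.subtype) :=
    p.injective_subtype.prodMap q.injective_subtype
  rw [← Module.finrank_prod, ← LinearMap.finrank_range_of_inj hinj, LinearMap.range_prodMap,
    p.range_subtype, q.range_subtype]

namespace Matrix

variable {K m n : Type*} [Fintype n]

theorem rank_eq_zero_iff [Field K] {A : Matrix m n K} : A.rank = 0 ↔ A = 0 := by
  classical
  rw [rank, Submodule.finrank_eq_zero, LinearMap.range_eq_bot, ← toLin'_apply',
    LinearEquiv.map_eq_zero_iff]

variable [Fintype m] [DecidableEq m] [DecidableEq n]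

theorem rank_fromBlocks_zero_zero [Field K] (A : Matrix m m K) (D : Matrix n n K) :
    (fromBlocks A 0 0 D).rank = A.rank + D.rank := by
  let b := (Pi.basisFun K m).prod (Pi.basisFun K n)
  have h := LinearMap.toMatrix_prodMap (Pi.basisFun K m) (Pi.basisFun K n) (toLin' A) (toLin' D)
  rw [LinearMap.toMatrix_eq_toMatrix', LinearMap.toMatrix_eq_toMatrix',
    LinearMap.toMatrix'_toLin', LinearMap.toMatrix'_toLin'] at h
  rw [← h, rank_eq_finrank_range_toLin _ b b, toLin_toMatrix, LinearMap.range_prodMap,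
    Submodule.finrank_prod]
  rfl

theorem fromBlocks_self_mul_eq_mul_fromBlocks_zero_zero_mul [Ring K] [StarRing K]
    (A : Matrix m m K) (W : Matrix m n K) (C : Matrix n n K) :
    fromBlocks A (A * W) (Wᴴ * A) C =
      fromBlocks 1 0 Wᴴ 1 * fromBlocks A 0 0 (C - Wᴴ * A * W) * fromBlocks 1 W 0 1 := by
  simp [fromBlocks_multiply, Matrix.mul_assoc]

theorem rank_fromBlocks_self_mul [Field K] [StarRing K]
    (A : Matrix m m K) (W : Matrix m n K) (C : Matrix n n K) :
    (fromBlocks A (A * W) (Wᴴ * A) C).rank = A.rank + (C - Wᴴ * A * W).rank := by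
  rw [fromBlocks_self_mul_eq_mul_fromBlocks_zero_zero_mul, rank_mul_eq_left_of_isUnit_det,
    rank_mul_eq_right_of_isUnit_det, rank_fromBlocks_zero_zero]
  all_goals simp

omit [Fintype n] [DecidableEq n] in
theorem fromBlocks_self_mul_eq_fromRows_mul_mul_conjTranspose [Ring K] [StarRing K]
    (A : Matrix m m K) (W : Matrix m n K) :
    fromBlocks A (A * W) (Wᴴ * A) (Wᴴ * A * W) = fromRows 1 Wᴴ * A * (fromRows 1 Wᴴ)ᴴ := by
  simp [fromRows_mul, conjTranspose_fromRows_eq_fromCols_conjTranspose, mul_fromCols]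

omit [DecidableEq n] in
theorem PosSemidef.fromBlocks_self_mul [Ring K] [PartialOrder K] [StarRing K]
    {A : Matrix m m K} (hA : A.PosSemidef) (W : Matrix m n K) :
    (fromBlocks A (A * W) (Wᴴ * A) (Wᴴ * A * W)).PosSemidef := by
  rw [fromBlocks_self_mul_eq_fromRows_mul_mul_conjTranspose]
  exact hA.mul_mul_conjTranspose_same _

end Matrix

theorem flat_extension_iff_and_posSemidef_general (m n : ℕ)
    (A : Matrix (Fin m) (Fin m) ℂ) (B : Matrix (Fin m) (Fin n) ℂ)
    (C : Matrix (Fin n) (Fin n) ℂ) (W : Matrix (Fin m) (Fin n) ℂ)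
    (hA : A.PosSemidef) (hB : B = A * W) :
    ((Matrix.fromBlocks A B Bᴴ C).rank = A.rank ↔ C = Wᴴ * A * W) ∧
    ((Matrix.fromBlocks A B Bᴴ C).rank = A.rank →
      (Matrix.fromBlocks A B Bᴴ C).PosSemidef) := by
  have hBH : Bᴴ = Wᴴ * A := by rw [hB, conjTranspose_mul, hA.isHermitian.eq]
  have hflat : (fromBlocks A B Bᴴ C).rank = A.rank ↔ C = Wᴴ * A * W := by
    rw [hBH, hB, rank_fromBlocks_self_mul, Nat.add_eq_left, Matrix.rank_eq_zero_iff, sub_eq_zero]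
  refine ⟨hflat, fun h => ?_⟩
  rw [hBH, hB, hflat.mp h]
  exact hA.fromBlocks_self_mul W

/-- For `A` positive semidefinite and `B = A * W`, the Hermitian block matrix
`M = [[A, B], [Bᴴ, C]]` satisfies `rank M = rank A` iff `C = Wᴴ * A * W`, and
in that case (flat extension) `M` is positive semidefinite. -/
theorem flat_extension_iff_and_posSemidef (m n : ℕ)
    (A : Matrix (Fin m) (Fin m) ℂ) (B : Matrix (Fin m) (Fin n) ℂ)
    (C : Matrix (Fin n) (Fin n) ℂ) (W : Matrix (Fin m) (Fin n) ℂ)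
    (hA : A.PosSemidef) (hC : C.IsHermitian) (hB : B = A * W) :
    ((Matrix.fromBlocks A B Bᴴ C).rank = A.rank ↔ C = Wᴴ * A * W) ∧
    ((Matrix.fromBlocks A B Bᴴ C).rank = A.rank →
      (Matrix.fromBlocks A B Bᴴ C).PosSemidef) :=
  flat_extension_iff_and_posSemidef_general m n A B C W hA hB
end

section
/- Let γ^{(5)} = {γ_{ij}}_{i+j ≤ 5} admit a representing measure μ on ℂ. Then the column space of the 6×4 matrix B (whose columns are the degree-3 moment columns B_{Z³}, B_{conj(Z)Z²}, B_{conj(Z)²Z}, B_{conj(Z)³} built from moments of degree 3, 4, 5) is contained in the column space of M(2); equivalently, there exists a matrix W with B = M(2) W. -/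
/-!
With `m_(a,b)(z) = z̄^a z^b`, both `M(2)` and `B` are matrices of integrals `∫ conj m_α * m_β dμ`,
`α` running over the monomials of degree ≤ 2. If `u` lies in the left kernel of `M(2)`, then
`p = ∑ ū_α m_α` has `∫ |p|² dμ = u M(2) u* = 0`, so `p = 0` `μ`-a.e. and
`u B = (∫ p̄ m_β dμ)_β = 0`. Over a field, this inclusion of left kernels is the factorization
`B = M(2) W`. No moment of degree 6 is involved: `p̄ m_β` has degree at most 5.
-/

open MeasureTheory ComplexConjugate Matrix

theorem Matrix.exists_eq_mul_of_vecMul_eq_zero {K m n p : Type*} [Field K] [Fintype m]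
    [Fintype n] {A : Matrix m n K} {B : Matrix m p K}
    (h : ∀ u : m → K, u ᵥ* A = 0 → u ᵥ* B = 0) : ∃ W : Matrix n p K, B = A * W := by
  classical
  have hspan : ∀ j, LinearMap.proj j ∘ₗ B.vecMulLinear ∈
      Submodule.span K (Set.range fun l => LinearMap.proj l ∘ₗ A.vecMulLinear) := by
    refine fun j => mem_span_of_iInf_ker_le_ker fun u hu => ?_
    have hu : u ᵥ* A = 0 := funext fun l => by simpa using Submodule.mem_iInf _ |>.1 hu l
    simp [h u hu]
  choose c hc using fun j => (Submodule.mem_span_range_iff_exists_fun K).1 (hspan j)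
  refine ⟨Matrix.of fun l j => c j l, Matrix.ext fun k j => ?_⟩
  have := LinearMap.congr_fun (hc j) (Pi.single k 1)
  simpa [Matrix.mul_apply, mul_comm] using this.symm

lemma conj_sum_mul {Ω ι : Type*} [Fintype ι] (c : ι → ℂ) (g : ι → Ω → ℂ) (h : Ω → ℂ) (x : Ω) :
    conj (∑ k, c k * g k x) * h x = ∑ k, conj (c k) * (conj (g k x) * h x) := by
  simp only [map_sum, map_mul, Finset.sum_mul, mul_assoc]

section IntegralGram

variable {Ω ι κ : Type*} [MeasurableSpace Ω] {μ : Measure Ω}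

noncomputable def integralGram (μ : Measure Ω) (g : ι → Ω → ℂ) (h : κ → Ω → ℂ) :
    Matrix ι κ ℂ :=
  Matrix.of fun k j => ∫ x, conj (g k x) * h j x ∂μ

@[simp]
lemma integralGram_apply (μ : Measure Ω) (g : ι → Ω → ℂ) (h : κ → Ω → ℂ) (k : ι) (j : κ) :
    integralGram μ g h k j = ∫ x, conj (g k x) * h j x ∂μ :=
  rfl

variable [Fintype ι]

lemma integrable_conj_sum_mul {c : ι → ℂ} {g : ι → Ω → ℂ} {h : Ω → ℂ}
    (hint : ∀ k, Integrable (fun x => conj (g k x) * h x) μ) :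
    Integrable (fun x => conj (∑ k, c k * g k x) * h x) μ := by
  simp only [conj_sum_mul]
  exact integrable_finsetSum _ fun k _ => (hint k).const_mul _

lemma integral_conj_sum_mul {c : ι → ℂ} {g : ι → Ω → ℂ} {h : Ω → ℂ}
    (hint : ∀ k, Integrable (fun x => conj (g k x) * h x) μ) :
    ∫ x, conj (∑ k, c k * g k x) * h x ∂μ = ∑ k, conj (c k) * ∫ x, conj (g k x) * h x ∂μ := by
  simp only [conj_sum_mul]
  rw [integral_finsetSum _ fun k _ => (hint k).const_mul _]
  simp only [integral_const_mul]

lemma vecMul_integralGram {g : ι → Ω → ℂ} {h : κ → Ω → ℂ}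
    (hint : ∀ k j, Integrable (fun x => conj (g k x) * h j x) μ) (u : ι → ℂ) :
    u ᵥ* integralGram μ g h = fun j => ∫ x, conj (∑ k, star (u k) * g k x) * h j x ∂μ := by
  ext j
  rw [integral_conj_sum_mul (hint · j)]
  simp [vecMul, dotProduct, integralGram]

lemma ae_eq_zero_of_vecMul_integralGram_self {g : ι → Ω → ℂ}
    (hint : ∀ k l, Integrable (fun x => conj (g k x) * g l x) μ) {u : ι → ℂ}
    (hu : u ᵥ* integralGram μ g g = 0) :
    (fun x => ∑ k, star (u k) * g k x) =ᵐ[μ] 0 := by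
  set p := fun x => ∑ k, star (u k) * g k x
  have hpg : ∀ l, Integrable (fun x => conj (p x) * g l x) μ :=
    fun l => integrable_conj_sum_mul (hint · l)
  have hpp_eq : (fun x => conj (p x) * p x) = fun x => ∑ l, star (u l) * (conj (p x) * g l x) := by
    ext x; simp only [p, Finset.mul_sum]; congr 1; ext l; ring
  have hpp_int : Integrable (fun x => conj (p x) * p x) μ := by
    rw [hpp_eq]; exact integrable_finsetSum _ fun l _ => (hpg l).const_mul _
  have hpp : ∫ x, conj (p x) * p x ∂μ = 0 := by
    have hrow : ∀ l, ∫ x, conj (p x) * g l x ∂μ = 0 := fun l => by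
      have := congrFun hu l
      rwa [vecMul_integralGram hint] at this
    rw [hpp_eq, integral_finsetSum _ fun l _ => (hpg l).const_mul _]
    simp [integral_const_mul, hrow]
  have hnormSq : (fun x => conj (p x) * p x) = fun x => (Complex.normSq (p x) : ℂ) := by
    ext x; rw [mul_comm, Complex.mul_conj]
  rw [hnormSq] at hpp hpp_int
  have h0 : (fun x => Complex.normSq (p x)) =ᵐ[μ] 0 :=
    (integral_eq_zero_iff_of_nonneg (fun x => Complex.normSq_nonneg _) hpp_int.re).1
      (Complex.ofReal_eq_zero.1 (integral_ofReal.symm.trans hpp))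
  filter_upwards [h0] with x hx
  exact Complex.normSq_eq_zero.1 hx

lemma vecMul_integralGram_eq_zero {g : ι → Ω → ℂ} {h : κ → Ω → ℂ}
    (hgg : ∀ k l, Integrable (fun x => conj (g k x) * g l x) μ)
    (hgh : ∀ k j, Integrable (fun x => conj (g k x) * h j x) μ) {u : ι → ℂ}
    (hu : u ᵥ* integralGram μ g g = 0) : u ᵥ* integralGram μ g h = 0 := by
  rw [vecMul_integralGram hgh]
  ext j
  refine (integral_congr_ae ?_).trans (integral_zero _ _)
  filter_upwards [ae_eq_zero_of_vecMul_integralGram_self hgg hu] with x hx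
  simp only [hx, Pi.zero_apply, map_zero, zero_mul]

theorem exists_integralGram_eq_mul {g : ι → Ω → ℂ} {h : κ → Ω → ℂ}
    (hgg : ∀ k l, Integrable (fun x => conj (g k x) * g l x) μ)
    (hgh : ∀ k j, Integrable (fun x => conj (g k x) * h j x) μ) :
    ∃ W, integralGram μ g h = integralGram μ g g * W :=
  exists_eq_mul_of_vecMul_eq_zero fun _ => vecMul_integralGram_eq_zero hgg hgh

end IntegralGram

def conjMonomial (e : ℕ × ℕ) (z : ℂ) : ℂ := conj z ^ e.1 * z ^ e.2

lemma conj_conjMonomial_mul (e f : ℕ × ℕ) (z : ℂ) :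
    conj (conjMonomial e z) * conjMonomial f z = conj z ^ (e.2 + f.1) * z ^ (e.1 + f.2) := by
  simp only [conjMonomial, map_mul, map_pow, Complex.conj_conj]
  ring

theorem quintic_range_inclusion_general (γ : ℕ → ℕ → ℂ) (μ : Measure ℂ)
    (hint : ∀ i j, i + j ≤ 5 →
      Integrable (fun z : ℂ => ((starRingEnd ℂ) z) ^ i * z ^ j) μ)
    (hrep : ∀ i j, i + j ≤ 5 →
      γ i j = ∫ z, ((starRingEnd ℂ) z) ^ i * z ^ j ∂μ)
    (M : Matrix (Fin 6) (Fin 6) ℂ) (B : Matrix (Fin 6) (Fin 4) ℂ)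
    (hM : M = !![γ 0 0, γ 0 1, γ 1 0, γ 0 2, γ 1 1, γ 2 0;
                 γ 1 0, γ 1 1, γ 2 0, γ 1 2, γ 2 1, γ 3 0;
                 γ 0 1, γ 0 2, γ 1 1, γ 0 3, γ 1 2, γ 2 1;
                 γ 2 0, γ 2 1, γ 3 0, γ 2 2, γ 3 1, γ 4 0;
                 γ 1 1, γ 1 2, γ 2 1, γ 1 3, γ 2 2, γ 3 1;
                 γ 0 2, γ 0 3, γ 1 2, γ 0 4, γ 1 3, γ 2 2])
    (hB : B = !![γ 0 3, γ 1 2, γ 2 1, γ 3 0;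
                 γ 1 3, γ 2 2, γ 3 1, γ 4 0;
                 γ 0 4, γ 1 3, γ 2 2, γ 3 1;
                 γ 2 3, γ 3 2, γ 4 1, γ 5 0;
                 γ 1 4, γ 2 3, γ 3 2, γ 4 1;
                 γ 0 5, γ 1 4, γ 2 3, γ 3 2]) :
    ∃ W : Matrix (Fin 6) (Fin 4) ℂ, B = M * W := by
  let e : Fin 6 → ℕ × ℕ := ![(0, 0), (0, 1), (1, 0), (0, 2), (1, 1), (2, 0)]
  let f : Fin 4 → ℕ × ℕ := ![(0, 3), (1, 2), (2, 1), (3, 0)]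
  have he : ∀ k, (e k).1 + (e k).2 ≤ 2 := by decide
  have hf : ∀ j, (f j).1 + (f j).2 ≤ 3 := by decide
  have hmoment : ∀ a b : ℕ × ℕ, a.1 + a.2 + (b.1 + b.2) ≤ 5 →
      Integrable (fun z => conj (conjMonomial a z) * conjMonomial b z) μ ∧
      ∫ z, conj (conjMonomial a z) * conjMonomial b z ∂μ = γ (a.2 + b.1) (a.1 + b.2) := by
    intro a b hab
    simp only [conj_conjMonomial_mul]
    exact ⟨hint _ _ (by omega), (hrep _ _ (by omega)).symm⟩
  have hee : ∀ k l, (e k).1 + (e k).2 + ((e l).1 + (e l).2) ≤ 5 := fun k l => by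
    have := he k; have := he l; omega
  have hef : ∀ k j, (e k).1 + (e k).2 + ((f j).1 + (f j).2) ≤ 5 := fun k j => by
    have := he k; have := hf j; omega
  have hM' : M = integralGram μ (fun k => conjMonomial (e k)) (fun k => conjMonomial (e k)) := by
    ext k l
    rw [integralGram_apply, (hmoment _ _ (hee k l)).2, hM]
    fin_cases k <;> fin_cases l <;> rfl
  have hB' : B = integralGram μ (fun k => conjMonomial (e k)) (fun j => conjMonomial (f j)) := by
    ext k j
    rw [integralGram_apply, (hmoment _ _ (hef k j)).2, hB]
    fin_cases k <;> fin_cases j <;> rfl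
  rw [hM', hB']
  exact exists_integralGram_eq_mul (fun k l => (hmoment _ _ (hee k l)).1)
    (fun k j => (hmoment _ _ (hef k j)).1)

/-- If the quintic bi-sequence `γ` has a representing measure `μ`, then the
column space of the degree-3 moment block `B` is contained in the column space
of `M(2)`: there is a matrix `W` with `B = M(2) * W`. -/
theorem quintic_range_inclusion (γ : ℕ → ℕ → ℂ) (μ : Measure ℂ)
    (hsym : ∀ i j, i + j ≤ 5 → (starRingEnd ℂ) (γ i j) = γ j i)
    (hint : ∀ i j, i + j ≤ 5 →
      Integrable (fun z : ℂ => ((starRingEnd ℂ) z) ^ i * z ^ j) μ)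
    (hrep : ∀ i j, i + j ≤ 5 →
      γ i j = ∫ z, ((starRingEnd ℂ) z) ^ i * z ^ j ∂μ)
    (M : Matrix (Fin 6) (Fin 6) ℂ) (B : Matrix (Fin 6) (Fin 4) ℂ)
    (hM : M = !![γ 0 0, γ 0 1, γ 1 0, γ 0 2, γ 1 1, γ 2 0;
                 γ 1 0, γ 1 1, γ 2 0, γ 1 2, γ 2 1, γ 3 0;
                 γ 0 1, γ 0 2, γ 1 1, γ 0 3, γ 1 2, γ 2 1;
                 γ 2 0, γ 2 1, γ 3 0, γ 2 2, γ 3 1, γ 4 0;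
                 γ 1 1, γ 1 2, γ 2 1, γ 1 3, γ 2 2, γ 3 1;
                 γ 0 2, γ 0 3, γ 1 2, γ 0 4, γ 1 3, γ 2 2])
    (hB : B = !![γ 0 3, γ 1 2, γ 2 1, γ 3 0;
                 γ 1 3, γ 2 2, γ 3 1, γ 4 0;
                 γ 0 4, γ 1 3, γ 2 2, γ 3 1;
                 γ 2 3, γ 3 2, γ 4 1, γ 5 0;
                 γ 1 4, γ 2 3, γ 3 2, γ 4 1;
                 γ 0 5, γ 1 4, γ 2 3, γ 3 2]) :
    ∃ W : Matrix (Fin 6) (Fin 4) ℂ, B = M * W :=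
  quintic_range_inclusion_general γ μ hint hrep M B hM hB
end

section
/- The points 1, −1, i, −i, 0, 1+i in ℂ are exactly the common roots of the two polynomials p(z) = z³ + (3(1+i)/4)(conj(z)² − z²) − conj(z) and q(z) = z² conj(z) + ((1−i)/4)(conj(z)² − z²) − z, regarded as functions ℂ → ℂ. -/
/-- The points `1, -1, i, -i, 0, 1+i` are exactly the common roots of
`p(z) = z³ + (3(1+i)/4)(conj(z)² - z²) - conj(z)` and
`q(z) = z² conj(z) + ((1-i)/4)(conj(z)² - z²) - z`. -/
theorem quintic_example_common_roots (w : ℂ) :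
    (w ^ 3 + (3 * (1 + Complex.I) / 4) * (((starRingEnd ℂ) w) ^ 2 - w ^ 2)
        - (starRingEnd ℂ) w = 0 ∧
     w ^ 2 * (starRingEnd ℂ) w + ((1 - Complex.I) / 4) * (((starRingEnd ℂ) w) ^ 2 - w ^ 2)
        - w = 0) ↔
    w ∈ ({1, -1, Complex.I, -Complex.I, 0, 1 + Complex.I} : Set ℂ) := by
  constructor
  · rintro ⟨hp, hq⟩
    have hq' := congrArg (starRingEnd ℂ) hq
    have hp' := congrArg (starRingEnd ℂ) hp
    simp only [map_add, map_sub, map_mul, map_pow, map_div₀, map_one, map_ofNat,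
      Complex.conj_conj, Complex.conj_I, map_zero] at hq' hp'
    have hA : w ^ 3 + 3 * ((starRingEnd ℂ) w) ^ 2 * w - 4 * (starRingEnd ℂ) w = 0 := by
      linear_combination hp + 3 * hq'
    have hB : ((starRingEnd ℂ) w) ^ 3 + 3 * w ^ 2 * (starRingEnd ℂ) w - 4 * w = 0 := by
      linear_combination hp' + 3 * hq
    have hs : (w + (starRingEnd ℂ) w) * ((w + (starRingEnd ℂ) w) - 2) *
        ((w + (starRingEnd ℂ) w) + 2) = 0 := by linear_combination hA + hB
    have hd : (w - (starRingEnd ℂ) w) * ((w - (starRingEnd ℂ) w) - 2 * Complex.I) *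
        ((w - (starRingEnd ℂ) w) + 2 * Complex.I) = 0 := by
      linear_combination hA - hB - 4 * (w - (starRingEnd ℂ) w) * Complex.I_sq
    simp only [mul_eq_zero] at hs hd
    simp only [Set.mem_insert_iff, Set.mem_singleton_iff]
    rcases hs with (h1 | h1) | h1 <;> rcases hd with (h2 | h2) | h2
    · have : w = 0 := by linear_combination (h1 + h2) / 2
      tauto
    · have : w = Complex.I := by linear_combination (h1 + h2) / 2
      tauto
    · have : w = -Complex.I := by linear_combination (h1 + h2) / 2
      tauto
    · have : w = 1 := by linear_combination (h1 + h2) / 2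
      tauto
    · have : w = 1 + Complex.I := by linear_combination (h1 + h2) / 2
      tauto
    · exfalso
      have hw : w = 1 - Complex.I := by linear_combination (h1 + h2) / 2
      rw [hw] at hp
      simp only [map_sub, map_one, Complex.conj_I] at hp
      have h6 : (6 : ℂ) = 0 := by
        linear_combination -hp + (6 - Complex.I) * Complex.I_sq
      norm_num at h6
    · have : w = -1 := by linear_combination (h1 + h2) / 2
      tauto
    · exfalso
      have hw : w = -1 + Complex.I := by linear_combination (h1 + h2) / 2
      rw [hw] at hp
      simp only [map_add, map_neg, map_one, Complex.conj_I] at hp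
      have h6 : (6 : ℂ) * Complex.I = 0 := by
        linear_combination hp - Complex.I * Complex.I_sq
      simp [Complex.I_ne_zero] at h6
    · exfalso
      have hw : w = -1 - Complex.I := by linear_combination (h1 + h2) / 2
      rw [hw] at hp
      simp only [map_sub, map_neg, map_one, Complex.conj_I] at hp
      have h6 : (6 : ℂ) - 6 * Complex.I = 0 := by
        linear_combination hp + (6 + Complex.I) * Complex.I_sq
      rw [Complex.ext_iff] at h6
      simp at h6
  · intro hw
    simp only [Set.mem_insert_iff, Set.mem_singleton_iff] at hw
    rcases hw with rfl | rfl | rfl | rfl | rfl | rfl <;>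
        refine ⟨?_, ?_⟩ <;>
        simp only [map_one, map_neg, map_add, map_sub, map_zero, Complex.conj_I]
    · ring
    · ring
    · ring
    · ring
    · linear_combination Complex.I * Complex.I_sq
    · linear_combination -Complex.I * Complex.I_sq
    · linear_combination -Complex.I * Complex.I_sq
    · linear_combination Complex.I * Complex.I_sq
    · ring
    · ring
    · linear_combination Complex.I * Complex.I_sq
    · linear_combination -Complex.I * Complex.I_sq
end
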